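/- Let (V, #, ∗) be a strongly left distributive hypervector space over a hyperfield (F, ⊕, ·), and let S = {α₁, α₂, ..., αₙ} be a basis of V. Then every vector α ∈ V has a unique representation with respect to S: if α ∈ a₁∗α₁ # a₂∗α₂ # ... # aₙ∗αₙ and α ∈ b₁∗α₁ # b₂∗α₂ # ... # bₙ∗αₙ for scalars aᵢ, bᵢ ∈ F, then aᵢ = bᵢ for all i = 1, ..., n. -/
import Mathlib


universe u v

/-- A hyperfield: `(F, ⊕, ·)` where `(F, ⊕)` is a commutative hypergroup with zero
element `zero` (each `a` having a unique additive inverse `neg a`, and satisfying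
reversibility), and `·` is an associative commutative multiplication distributing
over `⊕` from both sides, with `a·0 = 0·a = 0`, an identity `one` and multiplicative
inverses for nonzero elements. -/
structure Hyperfield (F : Type u) where
  add : F → F → Set F
  add_nonempty : ∀ a b, (add a b).Nonempty
  add_comm : ∀ a b, add a b = add b a
  add_assoc : ∀ a b c, (⋃ t ∈ add b c, add a t) = ⋃ t ∈ add a b, add t c
  zero : F
  neg : F → F
  neg_spec : ∀ a, zero ∈ add a (neg a) ∧ zero ∈ add (neg a) a
  neg_unique : ∀ a b, zero ∈ add a b → zero ∈ add b a → b = neg a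
  reversible : ∀ a b c, a ∈ add b c → b ∈ add a (neg c)
  mul : F → F → F
  mul_assoc : ∀ a b c, mul (mul a b) c = mul a (mul b c)
  left_distrib : ∀ a b c, (mul a) '' (add b c) = add (mul a b) (mul a c)
  right_distrib : ∀ a b c, (fun t => mul t a) '' (add b c) = add (mul b a) (mul c a)
  mul_zero : ∀ a, mul a zero = zero
  zero_mul : ∀ a, mul zero a = zero
  one : F
  mul_one : ∀ a, mul a one = a
  one_ne_zero : one ≠ zero
  mul_comm : ∀ a b, mul a b = mul b a
  exists_inv : ∀ a, a ≠ zero → ∃ b, mul a b = one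

/-- A hypervector space `(V, #, ∗)` over a hyperfield `K` on `F`:
`(V, #)` is a commutative hypergroup with zero vector `vzero`, and
`∗ : F × V → P*(V)` satisfies (i) `a ∗ (α # β) ⊆ a∗α # a∗β`,
(ii) `(a ⊕ b) ∗ α ⊆ a∗α # b∗α`, (iii) `(a·b) ∗ α = a ∗ (b ∗ α)`,
(iv) `1 ∗ α = {α}` and `0 ∗ α = {θ}`. -/
structure HypervectorSpace (F : Type u) (V : Type v) (K : Hyperfield F) where
  vadd : V → V → Set V
  vadd_nonempty : ∀ x y, (vadd x y).Nonempty
  vadd_comm : ∀ x y, vadd x y = vadd y x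
  vadd_assoc : ∀ x y z, (⋃ t ∈ vadd y z, vadd x t) = ⋃ t ∈ vadd x y, vadd t z
  vzero : V
  vneg : V → V
  vneg_spec : ∀ x, vzero ∈ vadd x (vneg x) ∧ vzero ∈ vadd (vneg x) x
  vneg_unique : ∀ x y, vzero ∈ vadd x y → vzero ∈ vadd y x → y = vneg x
  vreversible : ∀ x y z, x ∈ vadd y z → y ∈ vadd x (vneg z)
  smul : F → V → Set V
  smul_nonempty : ∀ a x, (smul a x).Nonempty
  smul_vadd : ∀ a x y, (⋃ t ∈ vadd x y, smul a t) ⊆ ⋃ u ∈ smul a x, ⋃ w ∈ smul a y, vadd u w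
  add_smul : ∀ a b x, (⋃ t ∈ K.add a b, smul t x) ⊆ ⋃ u ∈ smul a x, ⋃ w ∈ smul b x, vadd u w
  mul_smul : ∀ a b x, smul (K.mul a b) x = ⋃ t ∈ smul b x, smul a t
  one_smul : ∀ x, smul K.one x = {x}
  zero_smul : ∀ x, smul K.zero x = {vzero}

namespace HypervectorSpace

variable {F : Type u} {V : Type v} {K : Hyperfield F}

/-- The hyperoperation `#` extended to subsets: `A # B = ⋃_{a ∈ A, b ∈ B} a # b`. -/
def setVadd (H : HypervectorSpace F V K) (A B : Set V) : Set V :=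
  ⋃ a ∈ A, ⋃ b ∈ B, H.vadd a b

/-- A subset `W` of a hypervector space is a hypersubspace if it is closed under `#`
and `∗`, contains the zero vector, and contains additive inverses. -/
def IsHypersubspace (H : HypervectorSpace F V K) (W : Set V) : Prop :=
  (∀ α ∈ W, ∀ β ∈ W, H.vadd α β ⊆ W) ∧
  (∀ a : F, ∀ α ∈ W, H.smul a α ⊆ W) ∧
  H.vzero ∈ W ∧
  (∀ α ∈ W, H.vneg α ∈ W)

/-- Iterated hyperoperation `A₁ # A₂ # ... # Aₙ` on a list of subsets
(by convention the empty hypersum is `{θ}`). -/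
def hsum (H : HypervectorSpace F V K) : List (Set V) → Set V
  | [] => {H.vzero}
  | [A] => A
  | A :: B :: rest => H.setVadd A (HypervectorSpace.hsum H (B :: rest))

/-- The linear combination set `a₁∗α₁ # a₂∗α₂ # ... # aₙ∗αₙ`. -/
def lincomb (H : HypervectorSpace F V K) {n : ℕ} (a : Fin n → F) (α : Fin n → V) : Set V :=
  H.hsum (List.ofFn fun i => H.smul (a i) (α i))

/-- The hyperlinear span `HL(α₁, ..., αₙ) = ⋃ { a₁∗α₁ # ... # aₙ∗αₙ : a₁, ..., aₙ ∈ F }`. -/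
def HL (H : HypervectorSpace F V K) {n : ℕ} (α : Fin n → V) : Set V :=
  ⋃ a : Fin n → F, H.lincomb a α

/-- The family `α₁, ..., αₙ` is linearly dependent if `θ ∈ a₁∗α₁ # ... # aₙ∗αₙ`
for some scalars `a₁, ..., aₙ`, not all zero. -/
def LinDep (H : HypervectorSpace F V K) {n : ℕ} (α : Fin n → V) : Prop :=
  ∃ a : Fin n → F, (∃ i, a i ≠ K.zero) ∧ H.vzero ∈ H.lincomb a α

/-- Strongly left distributive: equality `(a ⊕ b) ∗ α = a∗α # b∗α`. -/
def StronglyLeftDistrib (H : HypervectorSpace F V K) : Prop :=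
  ∀ (a b : F) (x : V),
    (⋃ t ∈ K.add a b, H.smul t x) = ⋃ u ∈ H.smul a x, ⋃ w ∈ H.smul b x, H.vadd u w

/-- The set of all finite linear combinations of elements of `S`. -/
def HLSet (H : HypervectorSpace F V K) (S : Set V) : Set V :=
  ⋃ n : ℕ, ⋃ β : Fin n → V, ⋃ (_ : ∀ i, β i ∈ S), H.HL β

/-- A set `S` is linearly independent if every finite family of distinct elements
of `S` is linearly independent. -/
def LinIndepSet (H : HypervectorSpace F V K) (S : Set V) : Prop :=
  ∀ (n : ℕ) (β : Fin n → V), Function.Injective β → (∀ i, β i ∈ S) → ¬ H.LinDep β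

/-- `S` is a basis of the hypersubspace `U`: `S ⊆ U`, `S` is linearly independent,
and every element of `U` is a finite linear combination of elements of `S`. -/
def IsBasisOf (H : HypervectorSpace F V K) (S U : Set V) : Prop :=
  S ⊆ U ∧ H.LinIndepSet S ∧ U ⊆ H.HLSet S

end HypervectorSpace

/-! ### Auxiliary lemmas -/

theorem Hyperfield.neg_eq_mul {F : Type u} (K : Hyperfield F) (b : F) :
    K.neg b = K.mul (K.neg K.one) b := by
  have h1 : K.zero ∈ K.add K.one (K.neg K.one) := (K.neg_spec K.one).1
  have h2 : K.zero ∈ K.add (K.neg K.one) K.one := (K.neg_spec K.one).2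
  have e1 := K.right_distrib b K.one (K.neg K.one)
  have e2 := K.right_distrib b (K.neg K.one) K.one
  have m1 : K.mul K.one b = b := by rw [K.mul_comm, K.mul_one]
  have ha : K.zero ∈ K.add b (K.mul (K.neg K.one) b) := by
    have h : K.zero ∈ (fun t => K.mul t b) '' K.add K.one (K.neg K.one) :=
      ⟨K.zero, h1, K.zero_mul b⟩
    rwa [e1, m1] at h
  have hb : K.zero ∈ K.add (K.mul (K.neg K.one) b) b := by
    have h : K.zero ∈ (fun t => K.mul t b) '' K.add (K.neg K.one) K.one :=
      ⟨K.zero, h2, K.zero_mul b⟩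
    rwa [e2, m1] at h
  exact (K.neg_unique b (K.mul (K.neg K.one) b) ha hb).symm

theorem Hyperfield.neg_neg {F : Type u} (K : Hyperfield F) (b : F) :
    K.neg (K.neg b) = b :=
  (K.neg_unique (K.neg b) b (K.neg_spec b).2 (K.neg_spec b).1).symm

namespace HypervectorSpace

variable {F : Type u} {V : Type v} {K : Hyperfield F} (H : HypervectorSpace F V K)

theorem mem_setVadd {x : V} {A B : Set V} :
    x ∈ H.setVadd A B ↔ ∃ u ∈ A, ∃ w ∈ B, x ∈ H.vadd u w := by
  simp [setVadd]

theorem setVadd_comm (A B : Set V) : H.setVadd A B = H.setVadd B A := by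
  ext x
  simp only [H.mem_setVadd]
  constructor <;> rintro ⟨u, hu, w, hw, hx⟩ <;>
    exact ⟨w, hw, u, hu, by rwa [H.vadd_comm]⟩

theorem setVadd_assoc (A B C : Set V) :
    H.setVadd A (H.setVadd B C) = H.setVadd (H.setVadd A B) C := by
  ext x
  simp only [H.mem_setVadd]
  constructor
  · rintro ⟨p, hp, t, ⟨q, hq, r, hr, ht⟩, hx⟩
    have h1 : x ∈ ⋃ s ∈ H.vadd q r, H.vadd p s := Set.mem_biUnion ht hx
    rw [H.vadd_assoc] at h1
    simp only [Set.mem_iUnion] at h1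
    obtain ⟨s, hs, hx'⟩ := h1
    exact ⟨s, ⟨p, hp, q, hq, hs⟩, r, hr, hx'⟩
  · rintro ⟨t, ⟨p, hp, q, hq, ht⟩, r, hr, hx⟩
    have h1 : x ∈ ⋃ s ∈ H.vadd p q, H.vadd s r := Set.mem_biUnion ht hx
    rw [← H.vadd_assoc] at h1
    simp only [Set.mem_iUnion] at h1
    obtain ⟨s, hs, hx'⟩ := h1
    exact ⟨p, hp, s, ⟨q, hq, r, hr, hs⟩, hx'⟩

theorem setVadd_medial (A B C D : Set V) :
    H.setVadd (H.setVadd A B) (H.setVadd C D)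
      = H.setVadd (H.setVadd A C) (H.setVadd B D) := by
  calc H.setVadd (H.setVadd A B) (H.setVadd C D)
      = H.setVadd A (H.setVadd B (H.setVadd C D)) := (H.setVadd_assoc A B _).symm
    _ = H.setVadd A (H.setVadd (H.setVadd B C) D) := by rw [H.setVadd_assoc B C D]
    _ = H.setVadd A (H.setVadd (H.setVadd C B) D) := by rw [H.setVadd_comm B C]
    _ = H.setVadd A (H.setVadd C (H.setVadd B D)) := by rw [H.setVadd_assoc C B D]
    _ = H.setVadd (H.setVadd A C) (H.setVadd B D) := H.setVadd_assoc A C _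

theorem hsum_cons (A : Set V) (L : List (Set V)) (hL : L ≠ []) :
    H.hsum (A :: L) = H.setVadd A (H.hsum L) := by
  cases L with
  | nil => exact absurd rfl hL
  | cons B rest => rfl

theorem hsum_ofFn_one (f : Fin 1 → Set V) : H.hsum (List.ofFn f) = f 0 := by
  simp only [List.ofFn_succ, List.ofFn_zero]
  rfl

theorem hsum_ofFn_succ {k : ℕ} (f : Fin (k + 2) → Set V) :
    H.hsum (List.ofFn f)
      = H.setVadd (f 0) (H.hsum (List.ofFn fun i => f i.succ)) := by
  rw [List.ofFn_succ, H.hsum_cons]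
  exact List.ne_nil_of_length_pos (by simp)

/-- Inverse of a vector in a hyperoperation: `x ∈ y # z → −x ∈ (−y) # (−z)`. -/
theorem vneg_mem_vadd {x y z : V} (h : x ∈ H.vadd y z) :
    H.vneg x ∈ H.vadd (H.vneg y) (H.vneg z) := by
  have h0 : H.vzero ∈ H.vadd x (H.vneg x) := (H.vneg_spec x).1
  have h1 : H.vzero ∈ ⋃ t ∈ H.vadd y z, H.vadd t (H.vneg x) :=
    Set.mem_biUnion h h0
  rw [← H.vadd_assoc] at h1
  simp only [Set.mem_iUnion] at h1
  obtain ⟨t, ht, h2⟩ := h1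
  have h3 : H.vzero ∈ H.vadd t y := by rwa [H.vadd_comm] at h2
  have h4 : t = H.vneg y := H.vneg_unique y t h2 h3
  subst h4
  rw [H.vadd_comm] at ht
  exact H.vreversible (H.vneg y) (H.vneg x) z ht

/-- `u ∈ b ∗ β → −u ∈ (−b) ∗ β` (needs strong left distributivity). -/
theorem vneg_mem_smul (hsld : H.StronglyLeftDistrib) {b : F} {β u : V}
    (hu : u ∈ H.smul b β) : H.vneg u ∈ H.smul (K.neg b) β := by
  -- first: vneg u ∈ smul (neg 1) u
  have h0 : K.zero ∈ K.add K.one (K.neg K.one) := (K.neg_spec K.one).1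
  have h1 : H.vzero ∈ H.smul K.zero u := by rw [H.zero_smul]; rfl
  have h2 : H.vzero ∈ ⋃ t ∈ K.add K.one (K.neg K.one), H.smul t u :=
    Set.mem_biUnion h0 h1
  rw [hsld] at h2
  obtain ⟨p, hp, q, hq, h3⟩ := H.mem_setVadd.mp h2
  rw [H.one_smul, Set.mem_singleton_iff] at hp
  rw [hp] at h3
  have h4 : H.vzero ∈ H.vadd q u := by rwa [H.vadd_comm] at h3
  have h5 : q = H.vneg u := H.vneg_unique u q h3 h4
  subst h5
  -- now transport along neg b = (neg 1) * b
  rw [Hyperfield.neg_eq_mul, H.mul_smul]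
  exact Set.mem_biUnion hu hq

theorem hsum_mono : ∀ {k : ℕ} (f g : Fin (k + 1) → Set V),
    (∀ i, f i ⊆ g i) → H.hsum (List.ofFn f) ⊆ H.hsum (List.ofFn g)
  | 0, f, g, h => by
      rw [H.hsum_ofFn_one, H.hsum_ofFn_one]; exact h 0
  | (k + 1), f, g, h => by
      rw [H.hsum_ofFn_succ, H.hsum_ofFn_succ]
      intro x hx
      rw [H.mem_setVadd] at hx ⊢
      obtain ⟨u, hu, w, hw, hx⟩ := hx
      exact ⟨u, h 0 hu, w,
        hsum_mono (fun i => f i.succ) (fun i => g i.succ) (fun i => h i.succ) hw, hx⟩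

theorem hsum_neg (hsld : H.StronglyLeftDistrib) :
    ∀ {k : ℕ} (b : Fin (k + 1) → F) (β : Fin (k + 1) → V) (x : V),
    x ∈ H.hsum (List.ofFn fun i => H.smul (b i) (β i)) →
    H.vneg x ∈ H.hsum (List.ofFn fun i => H.smul (K.neg (b i)) (β i))
  | 0, b, β, x, hx => by
      rw [H.hsum_ofFn_one] at hx
      rw [H.hsum_ofFn_one]
      exact H.vneg_mem_smul hsld hx
  | (k + 1), b, β, x, hx => by
      rw [H.hsum_ofFn_succ] at hx
      rw [H.hsum_ofFn_succ]
      rw [H.mem_setVadd] at hx ⊢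
      obtain ⟨u, hu, w, hw, hx⟩ := hx
      exact ⟨H.vneg u, H.vneg_mem_smul hsld hu, H.vneg w,
        hsum_neg hsld (fun i => b i.succ) (fun i => β i.succ) w hw,
        H.vneg_mem_vadd hx⟩

theorem hsum_setVadd : ∀ {k : ℕ} (f g : Fin (k + 1) → Set V),
    H.setVadd (H.hsum (List.ofFn f)) (H.hsum (List.ofFn g))
      = H.hsum (List.ofFn fun i => H.setVadd (f i) (g i))
  | 0, f, g => by
      rw [H.hsum_ofFn_one, H.hsum_ofFn_one, H.hsum_ofFn_one]
  | (k + 1), f, g => by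
      rw [H.hsum_ofFn_succ f, H.hsum_ofFn_succ g,
        H.hsum_ofFn_succ (fun i => H.setVadd (f i) (g i)),
        H.setVadd_medial,
        hsum_setVadd (fun i => f i.succ) (fun i => g i.succ)]

theorem hsum_choice : ∀ {k : ℕ} (S : Fin (k + 1) → Set F)
    (gf : Fin (k + 1) → F → Set V) (x : V),
    x ∈ H.hsum (List.ofFn fun i => ⋃ t ∈ S i, gf i t) →
    ∃ c : Fin (k + 1) → F, (∀ i, c i ∈ S i) ∧
      x ∈ H.hsum (List.ofFn fun i => gf i (c i))
  | 0, S, gf, x, hx => by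
      rw [H.hsum_ofFn_one] at hx
      simp only [Set.mem_iUnion] at hx
      obtain ⟨t, ht, hx⟩ := hx
      refine ⟨fun _ => t, fun i => ?_, ?_⟩
      · have h : i = 0 := Fin.ext (by omega)
        rw [h]; exact ht
      · rw [H.hsum_ofFn_one]; exact hx
  | (k + 1), S, gf, x, hx => by
      rw [H.hsum_ofFn_succ] at hx
      rw [H.mem_setVadd] at hx
      obtain ⟨u, hu, w, hw, hx⟩ := hx
      simp only [Set.mem_iUnion] at hu
      obtain ⟨t0, ht0, hu⟩ := hu
      obtain ⟨c', hc', hw'⟩ :=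
        hsum_choice (fun i => S i.succ) (fun i => gf i.succ) w hw
      refine ⟨Fin.cons t0 c', fun i => ?_, ?_⟩
      · refine Fin.cases ?_ (fun j => ?_) i
        · rw [Fin.cons_zero]; exact ht0
        · rw [Fin.cons_succ]; exact hc' j
      · rw [H.hsum_ofFn_succ, H.mem_setVadd]
        refine ⟨u, by rw [Fin.cons_zero]; exact hu, w, ?_, hx⟩
        simp only [Fin.cons_succ]
        exact hw'

end HypervectorSpace

/-- If `S = {α₁, ..., αₙ}` is a basis of a strongly left distributive hypervector
space `V`, then every vector of `V` has a unique representation with respect to `S`. -/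
theorem HypervectorSpace.unique_representation {F : Type u} {V : Type v}
    {K : Hyperfield F} (H : HypervectorSpace F V K)
    (hsld : H.StronglyLeftDistrib) {n : ℕ} (α : Fin n → V)
    (hind : ¬ H.LinDep α)
    (hspan : ∀ x : V, ∃ a : Fin n → F, x ∈ H.lincomb a α)
    (x : V) (a b : Fin n → F)
    (hxa : x ∈ H.lincomb a α) (hxb : x ∈ H.lincomb b α) :
    a = b := by
  cases n with
  | zero => funext i; exact i.elim0
  | succ m =>
    have hnegx : H.vneg x ∈ H.hsum (List.ofFn fun i => H.smul (K.neg (b i)) (α i)) :=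
      H.hsum_neg hsld b α x hxb
    have h0 : H.vzero ∈ H.vadd x (H.vneg x) := (H.vneg_spec x).1
    have h1 : H.vzero ∈ H.setVadd
        (H.hsum (List.ofFn fun i => H.smul (a i) (α i)))
        (H.hsum (List.ofFn fun i => H.smul (K.neg (b i)) (α i))) :=
      H.mem_setVadd.mpr ⟨x, hxa, _, hnegx, h0⟩
    rw [H.hsum_setVadd] at h1
    have heq : (fun i : Fin (m + 1) =>
        H.setVadd (H.smul (a i) (α i)) (H.smul (K.neg (b i)) (α i)))
        = fun i => ⋃ t ∈ K.add (a i) (K.neg (b i)), H.smul t (α i) := by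
      funext i
      exact (hsld (a i) (K.neg (b i)) (α i)).symm
    rw [heq] at h1
    obtain ⟨c, hc, hzc⟩ := H.hsum_choice
      (fun i => K.add (a i) (K.neg (b i))) (fun i t => H.smul t (α i)) H.vzero h1
    have hc0 : ∀ i, c i = K.zero := by
      by_contra hcon
      push_neg at hcon
      exact hind ⟨c, hcon, hzc⟩
    funext i
    have h2 : K.zero ∈ K.add (a i) (K.neg (b i)) := hc0 i ▸ hc i
    have h3 : K.zero ∈ K.add (K.neg (b i)) (a i) := by rwa [K.add_comm]
    have h4 : K.neg (b i) = K.neg (a i) := K.neg_unique (a i) (K.neg (b i)) h2 h3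
    have h5 := congrArg K.neg h4
    rw [Hyperfield.neg_neg, Hyperfield.neg_neg] at h5
    exact h5.symm
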